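/- Define χ : Z8 + uZ8 → ℂ by χ(a + ub) = exp(πi(ā + b̄)/4), where ā, b̄ ∈ {0,…,7} are the canonical representatives of a, b ∈ Z/8Z. Then χ is a well-defined additive character (χ(x + y) = χ(x)χ(y) for all x, y, and χ takes values in the unit circle), and χ is a generating character: for every nonzero ideal I of Z8 + uZ8 there exists x ∈ I with χ(x) ≠ 1. Consequently Z8 + uZ8 is a Frobenius ring. -/

import Mathlib

/-! `χ` is the standard character `j ↦ exp(2πij/8)` of `ZMod 8` composed with the additive map
`a + ub ↦ a + b`, hence an additive character with values on the unit circle. Every nonzero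
element of `ZMod 8` divides `4`, so a nonzero element of an ideal, multiplied by a suitable `r`
(if its `Z₈`-part vanishes) or `ur` (otherwise), gives `4u`. Thus every nonzero ideal contains
`4u`, and `χ(4u) = exp(πi) = -1`. -/

open Real

/-- The character `χ : Z₈ + uZ₈ → ℂ`, `a + ub ↦ exp(πi(ā + b̄)/4)`, where
`ā, b̄ ∈ {0,…,7}` are canonical representatives. -/
noncomputable def chi8 (x : DualNumber (ZMod 8)) : ℂ :=
  Complex.exp (Real.pi * Complex.I * (x.fst.val + x.snd.val) / 4)

namespace TrivSqZeroExt

variable {R : Type*} [CommRing R]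

theorem inr_mem_of_forall_dvd {s : R} (hs : ∀ c : R, c ≠ 0 → c ∣ s)
    {I : Ideal (DualNumber R)} (hI : I ≠ ⊥) : inr s ∈ I := by
  obtain ⟨x, hxI, hx0⟩ := Submodule.exists_mem_ne_zero_of_ne_bot hI
  by_cases hfst : x.fst = 0
  · have hsnd : x.snd ≠ 0 := fun hsnd => hx0 (ext hfst hsnd)
    obtain ⟨r, hr⟩ := hs _ hsnd
    have : inl r * x = inr s := by ext <;> simp [hfst, hr, mul_comm]
    exact this ▸ I.mul_mem_left _ hxI
  · obtain ⟨r, hr⟩ := hs _ hfst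
    have : inr r * x = inr s := by ext <;> simp [hr, mul_comm]
    exact this ▸ I.mul_mem_left _ hxI

end TrivSqZeroExt

theorem chi8_eq_toCircle (x : DualNumber (ZMod 8)) :
    chi8 x = ZMod.toCircle (x.fst + x.snd) := by
  rw [← ZMod.natCast_zmod_val x.fst, ← ZMod.natCast_zmod_val x.snd, ← Nat.cast_add,
    ZMod.toCircle_natCast, chi8]
  congr 1
  push_cast
  ring

theorem ZMod.toCircle_four : ZMod.toCircle (4 : ZMod 8) = -1 := by
  have := ZMod.toCircle_natCast (N := 8) 4
  push_cast at this
  ext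
  rw [this, show 2 * π * Complex.I * 4 / 8 = π * Complex.I by ring, Complex.exp_pi_mul_I]
  simp

/-- `χ(a + ub) = exp(πi(ā + b̄)/4)` is an additive character of `Z₈ + uZ₈` with values
on the unit circle, and it is a generating character: every nonzero ideal contains an
element `x` with `χ(x) ≠ 1`.  Consequently `Z₈ + uZ₈` is a Frobenius ring. -/
theorem chi8_generating_character :
    (∀ x y : DualNumber (ZMod 8), chi8 (x + y) = chi8 x * chi8 y) ∧
      (∀ x : DualNumber (ZMod 8), ‖chi8 x‖ = 1) ∧
      (∀ I : Ideal (DualNumber (ZMod 8)), I ≠ ⊥ → ∃ x ∈ I, chi8 x ≠ 1) := by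
  refine ⟨fun x y => ?_, fun x => ?_, fun I hI => ?_⟩
  · rw [chi8_eq_toCircle, chi8_eq_toCircle, chi8_eq_toCircle, TrivSqZeroExt.fst_add,
      TrivSqZeroExt.snd_add, add_add_add_comm, AddChar.map_add_eq_mul, Circle.coe_mul]
  · rw [chi8_eq_toCircle, Circle.norm_coe]
  · have hdvd : ∀ c : ZMod 8, c ≠ 0 → c ∣ 4 := by decide
    refine ⟨_, TrivSqZeroExt.inr_mem_of_forall_dvd hdvd hI, ?_⟩
    rw [chi8_eq_toCircle, TrivSqZeroExt.fst_inr, TrivSqZeroExt.snd_inr, zero_add,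
      ZMod.toCircle_four]
    norm_num
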